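/- Let n ≥ 2 be an integer, p > 0 and λ > 0. Let ξ, z ∈ ℝⁿ with |ξ| = λ, z ≠ 0 and z ≠ ξ. Then K(0,λ;ξ,z) = 0, the map η ↦ K(0,λ;η,z) is differentiable at ξ, and its radial derivative satisfies ⟨∇_ξ K(0,λ;ξ,z), ξ⟩ = p |ξ−z|^{p−2} (|z|² − λ²). -/

import Mathlib

/-!
A point `ξ` of the sphere `|ξ - x| = λ` is fixed by the inversion, and the inversion rescales
distances to it: `|z - x| |ξ - z^{x,λ}| = λ |ξ - z|`. This gives `K = 0` on the sphere. Away from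
`z` and `z^{x,λ}` both terms of `K` are smooth with `∇ |η - a|^p = p |η - a|^{p-2} (η - a)`, and the
same rescaling turns the factor `(|z - x|/λ)^p |ξ - z^{x,λ}|^{p-2}` into
`(|z - x|/λ)^2 |ξ - z|^{p-2}`, after which the radial derivative is an algebraic identity.
-/

open RealInnerProductSpace

noncomputable section

/-- Inversion of `ξ` about the sphere of radius `l` centered at `x`. -/
def inversion {n : ℕ} (x : EuclideanSpace ℝ (Fin n)) (l : ℝ)
    (ξ : EuclideanSpace ℝ (Fin n)) : EuclideanSpace ℝ (Fin n) :=
  x + (l ^ 2 / ‖ξ - x‖ ^ 2) • (ξ - x)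

/-- The kernel `K(x, l; ξ, z)` in the moving-spheres computation. -/
def kernelK {n : ℕ} (p : ℝ) (x : EuclideanSpace ℝ (Fin n)) (l : ℝ)
    (ξ z : EuclideanSpace ℝ (Fin n)) : ℝ :=
  (‖z - x‖ / l) ^ p * ‖ξ - inversion x l z‖ ^ p - ‖ξ - z‖ ^ p

theorem Real.rpow_mul_div_rpow {a : ℝ} (ha : 0 < a) {d : ℝ} (hd : 0 ≤ d) (p q : ℝ) :
    a ^ p * (d / a) ^ q = a ^ (p - q) * d ^ q := by
  rw [Real.div_rpow hd ha.le, Real.rpow_sub ha]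
  field_simp

theorem hasFDerivAt_norm_sub_rpow {E : Type*} [NormedAddCommGroup E] [InnerProductSpace ℝ E]
    {a x : E} (p : ℝ) (hx : x ≠ a) :
    HasFDerivAt (fun η : E ↦ ‖η - a‖ ^ p) ((p * ‖x - a‖ ^ (p - 2)) • innerSL ℝ (x - a)) x := by
  have hxa : x - a ≠ 0 := sub_ne_zero.mpr hx
  have h : HasFDerivAt (fun v : E ↦ ‖v‖ ^ p) ((p * ‖x - a‖ ^ (p - 2)) • innerSL ℝ (x - a))
      (x - a) := by
    apply HasStrictFDerivAt.hasFDerivAt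
    convert (hasStrictFDerivAt_norm_sq (x - a)).rpow_const (p := p / 2) (by simp [hxa]) using 0
    simp_rw [← Real.rpow_natCast_mul (norm_nonneg _), ← Nat.cast_smul_eq_nsmul ℝ, smul_smul]
    ring_nf
  have := h.comp x ((hasFDerivAt_id x).sub_const a)
  rwa [ContinuousLinearMap.comp_id] at this

section Kernel

variable {n : ℕ} {p l : ℝ} {x ξ z : EuclideanSpace ℝ (Fin n)}

theorem inversion_eq_euclideanGeometry_inversion (x : EuclideanSpace ℝ (Fin n)) (l : ℝ)
    (z : EuclideanSpace ℝ (Fin n)) : inversion x l z = EuclideanGeometry.inversion x l z := by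
  simp [inversion, EuclideanGeometry.inversion, div_pow, dist_eq_norm, add_comm]

theorem inversion_sub_center (x : EuclideanSpace ℝ (Fin n)) (l : ℝ)
    (z : EuclideanSpace ℝ (Fin n)) : inversion x l z - x = (l ^ 2 / ‖z - x‖ ^ 2) • (z - x) := by
  simp [inversion]

theorem norm_sub_mul_norm_sub_inversion (hξ : ‖ξ - x‖ = l) (hz : z ≠ x) :
    ‖z - x‖ * ‖ξ - inversion x l z‖ = l * ‖ξ - z‖ := by
  rcases eq_or_ne ξ x with rfl | hξx
  · simp [← hξ, inversion]
  have hfix : EuclideanGeometry.inversion x l ξ = ξ :=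
    EuclideanGeometry.inversion_of_mem_sphere (by simpa [dist_eq_norm] using hξ)
  have := EuclideanGeometry.dist_inversion_mul_dist_center_eq (R := l) hz hξx
  rw [hfix, dist_eq_norm, dist_eq_norm, dist_eq_norm, dist_eq_norm, hξ, norm_sub_rev] at this
  rw [inversion_eq_euclideanGeometry_inversion, norm_sub_rev ξ z]
  linarith

theorem norm_sub_inversion (hξ : ‖ξ - x‖ = l) (hz : z ≠ x) :
    ‖ξ - inversion x l z‖ = ‖ξ - z‖ / (‖z - x‖ / l) := by
  have hzx : 0 < ‖z - x‖ := norm_pos_iff.mpr (sub_ne_zero.mpr hz)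
  rw [div_div_eq_mul_div, eq_div_iff hzx.ne', mul_comm, norm_sub_mul_norm_sub_inversion hξ hz,
    mul_comm]

theorem kernelK_eq_zero_of_norm_sub_eq (hl : 0 < l) (hξ : ‖ξ - x‖ = l) (hz : z ≠ x) :
    kernelK p x l ξ z = 0 := by
  have hzx : 0 < ‖z - x‖ := norm_pos_iff.mpr (sub_ne_zero.mpr hz)
  rw [kernelK, norm_sub_inversion hξ hz, ← Real.mul_rpow (by positivity) (by positivity),
    mul_div_cancel₀ _ (by positivity), sub_self]

theorem hasFDerivAt_kernelK (hzξ : z ≠ ξ) (hinv : inversion x l z ≠ ξ) :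
    HasFDerivAt (fun η ↦ kernelK p x l η z)
      ((‖z - x‖ / l) ^ p •
          (p * ‖ξ - inversion x l z‖ ^ (p - 2)) • innerSL ℝ (ξ - inversion x l z) -
        (p * ‖ξ - z‖ ^ (p - 2)) • innerSL ℝ (ξ - z)) ξ :=
  ((hasFDerivAt_norm_sub_rpow p hinv.symm).const_mul _).sub
    (hasFDerivAt_norm_sub_rpow p hzξ.symm)

theorem inversion_ne_of_norm_sub_eq (hl : 0 < l) (hξ : ‖ξ - x‖ = l) (hz : z ≠ x)
    (hzξ : z ≠ ξ) :
    inversion x l z ≠ ξ := by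
  intro h
  have := norm_sub_mul_norm_sub_inversion hξ hz
  rw [h, sub_self, norm_zero, mul_zero] at this
  exact (mul_pos hl (norm_pos_iff.mpr (sub_ne_zero.mpr hzξ.symm))).ne' this.symm

theorem differentiableAt_kernelK (hl : 0 < l) (hξ : ‖ξ - x‖ = l) (hz : z ≠ x) (hzξ : z ≠ ξ) :
    DifferentiableAt ℝ (fun η ↦ kernelK p x l η z) ξ :=
  (hasFDerivAt_kernelK hzξ (inversion_ne_of_norm_sub_eq hl hξ hz hzξ)).differentiableAt

theorem inner_gradient_kernelK_sub_center (hl : 0 < l) (hξ : ‖ξ - x‖ = l) (hz : z ≠ x)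
    (hzξ : z ≠ ξ) :
    ⟪gradient (fun η ↦ kernelK p x l η z) ξ, ξ - x⟫ =
      p * ‖ξ - z‖ ^ (p - 2) * (‖z - x‖ ^ 2 - l ^ 2) := by
  have hzx : 0 < ‖z - x‖ := norm_pos_iff.mpr (sub_ne_zero.mpr hz)
  have hK := hasFDerivAt_kernelK (p := p) hzξ (inversion_ne_of_norm_sub_eq hl hξ hz hzξ)
  rw [inner_gradient_left, hK.fderiv]
  simp only [sub_apply, smul_apply, innerSL_apply_apply, smul_eq_mul]
  have hinv_inner :
      ⟪ξ - inversion x l z, ξ - x⟫ = l ^ 2 - l ^ 2 / ‖z - x‖ ^ 2 * ⟪z - x, ξ - x⟫ := by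
    rw [← sub_sub_sub_cancel_right ξ (inversion x l z) x, inner_sub_left, inversion_sub_center,
      real_inner_smul_left, real_inner_self_eq_norm_sq, hξ]
  have hz_inner : ⟪ξ - z, ξ - x⟫ = l ^ 2 - ⟪z - x, ξ - x⟫ := by
    rw [← sub_sub_sub_cancel_right ξ z x, inner_sub_left, real_inner_self_eq_norm_sq, hξ]
  have hcoef : (‖z - x‖ / l) ^ p * ‖ξ - inversion x l z‖ ^ (p - 2) =
      (‖z - x‖ / l) ^ 2 * ‖ξ - z‖ ^ (p - 2) := by
    rw [norm_sub_inversion hξ hz, Real.rpow_mul_div_rpow (by positivity) (norm_nonneg _),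
      show p - (p - 2) = 2 by ring, Real.rpow_two]
  have hscale : (‖z - x‖ / l) ^ 2 * (l ^ 2 - l ^ 2 / ‖z - x‖ ^ 2 * ⟪z - x, ξ - x⟫) =
      ‖z - x‖ ^ 2 - ⟪z - x, ξ - x⟫ := by
    field_simp
  rw [hinv_inner, hz_inner]
  linear_combination p * (l ^ 2 - l ^ 2 / ‖z - x‖ ^ 2 * ⟪z - x, ξ - x⟫) * hcoef +
    p * ‖ξ - z‖ ^ (p - 2) * hscale

end Kernel

theorem stmt_15_general {n : ℕ} (p : ℝ)
    (lam : ℝ) (hlam : 0 < lam)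
    (ξ z : EuclideanSpace ℝ (Fin n)) (hξ : ‖ξ‖ = lam) (hz : z ≠ 0) (hzξ : z ≠ ξ) :
    kernelK p (0 : EuclideanSpace ℝ (Fin n)) lam ξ z = 0 ∧
    DifferentiableAt ℝ
      (fun η : EuclideanSpace ℝ (Fin n) =>
        kernelK p (0 : EuclideanSpace ℝ (Fin n)) lam η z) ξ ∧
    ⟪gradient
        (fun η : EuclideanSpace ℝ (Fin n) =>
          kernelK p (0 : EuclideanSpace ℝ (Fin n)) lam η z) ξ, ξ⟫ =
      p * ‖ξ - z‖ ^ (p - 2) * (‖z‖ ^ 2 - lam ^ 2) := by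
  have hξ₀ : ‖ξ - 0‖ = lam := by rwa [sub_zero]
  refine ⟨kernelK_eq_zero_of_norm_sub_eq hlam hξ₀ hz, differentiableAt_kernelK hlam hξ₀ hz hzξ, ?_⟩
  simpa only [sub_zero] using inner_gradient_kernelK_sub_center (p := p) hlam hξ₀ hz hzξ

theorem stmt_15 {n : ℕ} (hn : 2 ≤ n) (p : ℝ) (hp : 0 < p)
    (lam : ℝ) (hlam : 0 < lam)
    (ξ z : EuclideanSpace ℝ (Fin n)) (hξ : ‖ξ‖ = lam) (hz : z ≠ 0) (hzξ : z ≠ ξ) :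
    kernelK p (0 : EuclideanSpace ℝ (Fin n)) lam ξ z = 0 ∧
    DifferentiableAt ℝ
      (fun η : EuclideanSpace ℝ (Fin n) =>
        kernelK p (0 : EuclideanSpace ℝ (Fin n)) lam η z) ξ ∧
    ⟪gradient
        (fun η : EuclideanSpace ℝ (Fin n) =>
          kernelK p (0 : EuclideanSpace ℝ (Fin n)) lam η z) ξ, ξ⟫ =
      p * ‖ξ - z‖ ^ (p - 2) * (‖z‖ ^ 2 - lam ^ 2) :=
  stmt_15_general p lam hlam ξ z hξ hz hzξ
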